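/- arXiv:2003.12950 — 3 statements merged into one kernel-verified Lean document; each statement's English description precedes it below -/
import Mathlib

section
/- For all real numbers A > 0, μ_t > 0, δ ≥ 0, p > 0 and θ̃ ∈ ℝ with |θ̃| < p: ∫₀^∞ w^{A+μ_t−1} · (1+w)^{δ} · e^{−p·w} · ₁F₁(A; A+μ_t; −θ̃·w) dw = Σ_{g=0}^{∞} ((A)_g·(−θ̃)^g/((A+μ_t)_g·g!)) · Γ(A+μ_t+g) · U(A+μ_t+g, A+μ_t+g+δ+1; p), the series on the right converging absolutely. (This is the evaluation of the expectation I₂ in Appendix C of the paper, the key analytic step in Theorem 2 for non-integer Nakagami parameters.) -/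
/-!
Expand `₁F₁(A; A + μₜ; -θ̃ w)` into its power series. Since `(A)_g ≤ (A + μₜ)_g`, the `g`-th
term is bounded by `(|θ̃| w)^g / g!`, so the series is dominated by `e^{|θ̃| w}`, and
`w^{A+μₜ-1} (1 + w)^δ e^{-(p - |θ̃|) w}` is integrable because `|θ̃| < p`. Dominated convergence
then allows termwise integration, and each term is a Tricomi integral:
`∫₀^∞ w^{s-1} (1 + w)^δ e^{-p w} dw = Γ(s) U(s, s + δ + 1; p)`.
-/

open MeasureTheory Real

noncomputable section

/-- Ascending (Pochhammer) factorial `(a)_n`. -/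
def poch (a : ℝ) (n : ℕ) : ℝ := (ascPochhammer ℝ n).eval a

/-- Kummer confluent hypergeometric function `₁F₁(a; b; z)`. -/
def oneF1 (a b z : ℝ) : ℝ := ∑' n : ℕ, (poch a n / poch b n) * z ^ n / (n.factorial : ℝ)

/-- Tricomi confluent hypergeometric function `U(a, b; z)` (for `a > 0`, `z > 0`). -/
def tricomiU (a b z : ℝ) : ℝ :=
  (1 / Real.Gamma a) * ∫ t in Set.Ioi (0:ℝ), Real.exp (-z * t) * t ^ (a - 1) * (1 + t) ^ (b - a - 1)

lemma poch_pos {a : ℝ} (ha : 0 < a) (n : ℕ) : 0 < poch a n :=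
  ascPochhammer_pos n a ha

lemma poch_le_poch {a b : ℝ} (ha : 0 < a) (hab : a ≤ b) (n : ℕ) : poch a n ≤ poch b n := by
  induction n with
  | zero => simp [poch]
  | succ n ih =>
    simp only [poch, ascPochhammer_succ_eval] at ih ⊢
    exact mul_le_mul ih (by linarith) (by positivity) (poch_pos (ha.trans_le hab) n).le

lemma abs_poch_mul_pow_div_le {a b : ℝ} (ha : 0 < a) (hab : a ≤ b) (x : ℝ) (n : ℕ) :
    |poch a n * x ^ n / (poch b n * n.factorial)| ≤ |x| ^ n / n.factorial := by
  have hb := poch_pos (ha.trans_le hab) n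
  rw [show poch a n * x ^ n / (poch b n * n.factorial)
      = poch a n / poch b n * (x ^ n / n.factorial) by ring, abs_mul,
    abs_of_pos (div_pos (poch_pos ha n) hb), abs_div, abs_pow, Nat.abs_cast]
  exact mul_le_of_le_one_left (by positivity) ((div_le_one hb).2 (poch_le_poch ha hab n))

lemma one_add_rpow_le {w : ℝ} (hw : 0 ≤ w) (δ : ℝ) :
    (1 + w) ^ δ ≤ 2 ^ |δ| * (1 + w ^ |δ|) := by
  have hmono : (1 + w) ^ δ ≤ (1 + w) ^ |δ| :=
    rpow_le_rpow_of_exponent_le (by linarith) (le_abs_self δ)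
  refine hmono.trans ?_
  rcases le_total w 1 with hw1 | hw1
  · calc (1 + w) ^ |δ| ≤ 2 ^ |δ| := by gcongr; linarith
      _ ≤ 2 ^ |δ| * (1 + w ^ |δ|) := le_mul_of_one_le_right (by positivity)
          (by linarith [rpow_nonneg hw |δ|])
  · calc (1 + w) ^ |δ| ≤ (2 * w) ^ |δ| := by gcongr; linarith
      _ = 2 ^ |δ| * w ^ |δ| := mul_rpow (by norm_num) hw
      _ ≤ 2 ^ |δ| * (1 + w ^ |δ|) := by gcongr; linarith

lemma integrableOn_rpow_mul_exp_neg_mul {s c : ℝ} (hs : -1 < s) (hc : 0 < c) :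
    IntegrableOn (fun w : ℝ => w ^ s * exp (-c * w)) (Set.Ioi 0) := by
  simpa using integrableOn_rpow_mul_exp_neg_mul_rpow hs one_pos hc

lemma integrableOn_rpow_mul_one_add_rpow_mul_exp_neg_mul {s c : ℝ} (hs : 0 < s) (hc : 0 < c)
    (δ : ℝ) :
    IntegrableOn (fun w : ℝ => w ^ (s - 1) * (1 + w) ^ δ * exp (-c * w)) (Set.Ioi 0) := by
  have hdom : IntegrableOn (fun w : ℝ => 2 ^ |δ| *
      (w ^ (s - 1) * exp (-c * w) + w ^ (s - 1 + |δ|) * exp (-c * w))) (Set.Ioi 0) :=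
    ((integrableOn_rpow_mul_exp_neg_mul (by linarith) hc).add
      (integrableOn_rpow_mul_exp_neg_mul (by linarith [abs_nonneg δ]) hc)).const_mul _
  have hcont : ContinuousOn (fun w : ℝ => w ^ (s - 1) * (1 + w) ^ δ * exp (-c * w))
      (Set.Ioi 0) := fun w hw => by
    have hw : 0 < w := hw
    have hw1 : 0 < 1 + w := by positivity
    exact ContinuousAt.continuousWithinAt (by fun_prop (disch := simp [hw.ne', hw1.ne']))
  refine hdom.mono' (hcont.aestronglyMeasurable measurableSet_Ioi) ?_
  filter_upwards [self_mem_ae_restrict measurableSet_Ioi] with w (hw : 0 < w)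
  rw [norm_of_nonneg (by positivity), rpow_add hw]
  calc w ^ (s - 1) * (1 + w) ^ δ * exp (-c * w)
      ≤ w ^ (s - 1) * (2 ^ |δ| * (1 + w ^ |δ|)) * exp (-c * w) := by
        gcongr; exact one_add_rpow_le hw.le δ
    _ = _ := by ring

lemma Gamma_mul_tricomiU {a : ℝ} (ha : 0 < a) (b z : ℝ) :
    Gamma a * tricomiU a b z =
      ∫ t in Set.Ioi 0, exp (-z * t) * t ^ (a - 1) * (1 + t) ^ (b - a - 1) := by
  rw [tricomiU, ← mul_assoc, mul_one_div_cancel (Gamma_pos_of_pos ha).ne', one_mul]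

lemma hasSum_pow_div_factorial (x : ℝ) : HasSum (fun n => x ^ n / n.factorial) (exp x) := by
  simpa [exp_eq_exp_ℝ] using NormedSpace.expSeries_div_hasSum_exp x

lemma hasSum_integral_mul_pow {μ : Measure ℝ} {k : ℝ → ℝ} {a : ℕ → ℝ} {q : ℝ}
    (ha : ∀ n, |a n| ≤ q ^ n / n.factorial) (hk : AEStronglyMeasurable k μ)
    (hkq : Integrable (fun w => |k w| * exp (q * |w|)) μ) :
    HasSum (fun n => a n * ∫ w, k w * w ^ n ∂μ) (∫ w, k w * ∑' n, a n * w ^ n ∂μ) ∧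
      Summable (fun n => |a n * ∫ w, k w * w ^ n ∂μ|) := by
  have hq : 0 ≤ q := by simpa using (abs_nonneg (a 1)).trans (ha 1)
  set bound : ℕ → ℝ → ℝ := fun n w => |k w| * ((q * |w|) ^ n / n.factorial)
  have bound_nonneg : ∀ n w, 0 ≤ bound n w := fun n w => by positivity
  have bound_hasSum : ∀ w, HasSum (fun n => bound n w) (|k w| * exp (q * |w|)) :=
    fun w => (hasSum_pow_div_factorial _).mul_left _
  have bound_meas : ∀ n, AEStronglyMeasurable (bound n) μ := fun n =>
    hk.norm.mul (by fun_prop)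
  have bound_integrable : Integrable (fun w => ∑' n, bound n w) μ :=
    hkq.congr (ae_of_all _ fun w => (bound_hasSum w).tsum_eq.symm)
  have hterm : ∀ n w, ‖a n * w ^ n‖ ≤ (q * |w|) ^ n / n.factorial := fun n w => by
    rw [norm_mul, norm_pow, Real.norm_eq_abs, Real.norm_eq_abs, mul_pow, mul_div_right_comm]
    exact mul_le_mul_of_nonneg_right (ha n) (by positivity)
  set F : ℕ → ℝ → ℝ := fun n w => k w * (a n * w ^ n)
  have hF_le : ∀ n w, ‖F n w‖ ≤ bound n w := fun n w => by
    rw [norm_mul, Real.norm_eq_abs]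
    exact mul_le_mul_of_nonneg_left (hterm n w) (abs_nonneg _)
  have hF_hasSum : ∀ w, HasSum (fun n => F n w) (k w * ∑' n, a n * w ^ n) := fun w =>
    ((hasSum_pow_div_factorial _).summable.of_norm_bounded (hterm · w)).hasSum.mul_left (k w)
  have hF_meas : ∀ n, AEStronglyMeasurable (F n) μ := fun n => hk.mul (by fun_prop)
  have hF_integral : ∀ n, ∫ w, F n w ∂μ = a n * ∫ w, k w * w ^ n ∂μ := fun n => by
    simp only [F, mul_left_comm (k _), integral_const_mul]
  -- Dominated convergence for the bound itself gives the summability of its integrals.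
  have hbound_int : HasSum (fun n => ∫ w, bound n w ∂μ) (∫ w, |k w| * exp (q * |w|) ∂μ) :=
    hasSum_integral_of_dominated_convergence bound bound_meas
      (fun n => ae_of_all _ fun w => (Real.norm_of_nonneg (bound_nonneg n w)).le)
      (ae_of_all _ fun w => (bound_hasSum w).summable) bound_integrable
      (ae_of_all _ bound_hasSum)
  refine ⟨?_, hbound_int.summable.of_nonneg_of_le (fun n => abs_nonneg _) fun n => ?_⟩
  · simpa only [hF_integral] using hasSum_integral_of_dominated_convergence bound hF_meas
      (fun n => ae_of_all _ (hF_le n)) (ae_of_all _ fun w => (bound_hasSum w).summable)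
      bound_integrable (ae_of_all _ hF_hasSum)
  · rw [← hF_integral, ← Real.norm_eq_abs]
    refine norm_integral_le_of_norm_le (hkq.mono' (bound_meas n) (ae_of_all _ fun w => ?_))
      (ae_of_all _ (hF_le n))
    rw [Real.norm_of_nonneg (bound_nonneg n w)]
    exact le_hasSum (bound_hasSum w) n fun m _ => bound_nonneg m w

lemma setIntegral_rpow_mul_one_add_rpow_mul_exp_neg_mul {s : ℝ} (hs : 0 < s) (δ p : ℝ) :
    ∫ w in Set.Ioi 0, w ^ (s - 1) * (1 + w) ^ δ * exp (-p * w) =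
      Gamma s * tricomiU s (s + δ + 1) p := by
  rw [Gamma_mul_tricomiU hs, show s + δ + 1 - s - 1 = δ by ring]
  exact setIntegral_congr_fun measurableSet_Ioi fun w _ => by ring

theorem integral_I2_noninteger_case_general
    (A μt δ p θ : ℝ) (hA : 0 < A) (hμt : 0 < μt) (hp : 0 < p)
    (hθ : |θ| < p) :
    (∫ w in Set.Ioi (0:ℝ),
        w ^ (A + μt - 1) * (1 + w) ^ δ * Real.exp (-p * w) * oneF1 A (A + μt) (-θ * w))
      = (∑' g : ℕ,
          (poch A g * (-θ) ^ g / (poch (A + μt) g * (g.factorial : ℝ))) *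
            Real.Gamma (A + μt + g) * tricomiU (A + μt + g) (A + μt + g + δ + 1) p)
    ∧ Summable (fun g : ℕ =>
        |(poch A g * (-θ) ^ g / (poch (A + μt) g * (g.factorial : ℝ))) *
          Real.Gamma (A + μt + g) * tricomiU (A + μt + g) (A + μt + g + δ + 1) p|) := by
  have hs : 0 < A + μt := by positivity
  set k : ℝ → ℝ := fun w => w ^ (A + μt - 1) * (1 + w) ^ δ * exp (-p * w)
  set a : ℕ → ℝ := fun n => poch A n * (-θ) ^ n / (poch (A + μt) n * n.factorial)
  have ha : ∀ n, |a n| ≤ |θ| ^ n / n.factorial := fun n => by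
    simpa only [abs_neg] using abs_poch_mul_pow_div_le hA (by linarith) (-θ) n
  have hk : IntegrableOn k (Set.Ioi 0) :=
    integrableOn_rpow_mul_one_add_rpow_mul_exp_neg_mul hs hp δ
  have hkθ : IntegrableOn (fun w => |k w| * exp (|θ| * |w|)) (Set.Ioi 0) := by
    refine (integrableOn_rpow_mul_one_add_rpow_mul_exp_neg_mul hs (sub_pos.2 hθ) δ).congr_fun
      (fun w (hw : 0 < w) => ?_) measurableSet_Ioi
    have hkw : 0 ≤ k w := by positivity
    rw [abs_of_pos hw, abs_of_nonneg hkw, mul_assoc, ← exp_add]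
    ring_nf
  have honeF1 : ∀ w, oneF1 A (A + μt) (-θ * w) = ∑' n, a n * w ^ n := fun w =>
    tsum_congr fun n => by ring
  have hmoment : ∀ n : ℕ, ∫ w in Set.Ioi 0, k w * w ^ n =
      Gamma (A + μt + n) * tricomiU (A + μt + n) (A + μt + n + δ + 1) p := fun n => by
    rw [← setIntegral_rpow_mul_one_add_rpow_mul_exp_neg_mul (by positivity)]
    refine setIntegral_congr_fun measurableSet_Ioi fun w (hw : 0 < w) => ?_
    rw [show A + μt + n - 1 = A + μt - 1 + n by ring, rpow_add hw, rpow_natCast]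
    ring
  obtain ⟨hsum, habs⟩ := hasSum_integral_mul_pow ha hk.aestronglyMeasurable hkθ
  simp only [hmoment, ← honeF1, ← mul_assoc] at hsum habs
  exact ⟨hsum.tsum_eq.symm, habs⟩

/-- the expectation `I₂` of Appendix C of the paper: for `A, μ_t > 0`,
`δ ≥ 0`, `p > 0` and `|θ̃| < p`,
`∫₀^∞ w^{A+μ_t−1}·(1+w)^δ·e^{−pw}·₁F₁(A; A+μ_t; −θ̃w) dw
  = Σ_{g=0}^∞ ((A)_g·(−θ̃)^g/((A+μ_t)_g·g!))·Γ(A+μ_t+g)·U(A+μ_t+g, A+μ_t+g+δ+1; p)`,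
 the series converging absolutely. -/
theorem integral_I2_noninteger_case
    (A μt δ p θ : ℝ) (hA : 0 < A) (hμt : 0 < μt) (hδ : 0 ≤ δ) (hp : 0 < p)
    (hθ : |θ| < p) :
    (∫ w in Set.Ioi (0:ℝ),
        w ^ (A + μt - 1) * (1 + w) ^ δ * Real.exp (-p * w) * oneF1 A (A + μt) (-θ * w))
      = (∑' g : ℕ,
          (poch A g * (-θ) ^ g / (poch (A + μt) g * (g.factorial : ℝ))) *
            Real.Gamma (A + μt + g) * tricomiU (A + μt + g) (A + μt + g + δ + 1) p)
    ∧ Summable (fun g : ℕ =>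
        |(poch A g * (-θ) ^ g / (poch (A + μt) g * (g.factorial : ℝ))) *
          Real.Gamma (A + μt + g) * tricomiU (A + μt + g) (A + μt + g + δ + 1) p|) :=
  integral_I2_noninteger_case_general A μt δ p θ hA hμt hp hθ

end
end

section
/- Let K ≥ 1, γ̃ > 0. Let Z_1,…,Z_K be i.i.d. with SR-type density with parameters (α, Θ_a, N_a, ζ_a) satisfying ζ_a(0) = 1; let V_1,…,V_K be i.i.d. Gamma(m, m/Ω) with real 0 < m < 1 and Ω > 0; let W_c be as in Lemma 2 of the paper with fixed parameters and E[(1+W_c)^{mK}] < ∞; all mutually independent. Then lim_{η→∞} η^{m·K} · Pr[max_{1≤k≤K} min(η·Z_k, η·V_k) < γ̃·(1+W_c)] = (1/Γ(m+1))^K · (m·γ̃/Ω)^{m·K} · E[(1+W_c)^{m·K}]. In particular, for terrestrial Nakagami parameter m < 1 the satellite network achieves diversity order m·K. (Corollary 3 of the paper, Case 2 with m_cb < 1.) -/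
open MeasureTheory ProbabilityTheory Real Filter

noncomputable section

/-- SR-type density with parameters `(α, Θ, N, ζ)`:
`f(x) = α·Σ_{κ=0}^{N} ζ(κ)·x^κ·e^{−Θ·x}` for `x ≥ 0`, `0` otherwise. -/
def srPDF (α Θ : ℝ) (N : ℕ) (ζ : ℕ → ℝ) (x : ℝ) : ℝ :=
  if 0 ≤ x then α * ∑ κ ∈ Finset.range (N + 1), ζ κ * x ^ κ * Real.exp (-Θ * x) else 0

/-- Gamma density with shape `a` and rate `b`. -/
def gammaPDF (a b : ℝ) (x : ℝ) : ℝ :=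
  if 0 ≤ x then b ^ a * x ^ (a - 1) * Real.exp (-b * x) / Real.Gamma a else 0

/-- `X` has density `f` with respect to Lebesgue measure. -/
def HasDensity {Ω : Type*} [MeasurableSpace Ω] (P : Measure Ω) (X : Ω → ℝ) (f : ℝ → ℝ) : Prop :=
  Measure.map X P = volume.withDensity (fun x => ENNReal.ofReal (f x))

/-- Beta function `B(x,y) = Γ(x)Γ(y)/Γ(x+y)`. -/
def betaFn (x y : ℝ) : ℝ := Real.Gamma x * Real.Gamma y / Real.Gamma (x + y)

/-- Gauss hypergeometric function `₂F₁(a,b;c;z)` via the Euler integral. -/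
def twoF1 (a b c z : ℝ) : ℝ :=
  (Real.Gamma c / (Real.Gamma a * Real.Gamma (c - a))) *
    ∫ t in (0:ℝ)..1, t ^ (a - 1) * (1 - t) ^ (c - a - 1) * (1 - z * t) ^ (-b)

/-- `Λ(i) = i_1 + ⋯ + i_M + M` for a multi-index `i`. -/
def ΛIdx (M : ℕ) (i : ℕ → ℕ) : ℕ := (∑ k ∈ Finset.range M, i k) + M

/-- `C_i = α^M·(Π ζ(i_κ))·(Π_{j=1}^{M−1} B(i_1+⋯+i_j+j, i_{j+1}+1))`. -/
def Ccoef (α : ℝ) (ζ : ℕ → ℝ) (M : ℕ) (i : ℕ → ℕ) : ℝ :=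
  α ^ M * (∏ k ∈ Finset.range M, ζ (i k)) *
    ∏ j ∈ Finset.range (M - 1),
      betaFn ((∑ l ∈ Finset.range (j + 1), (i l : ℝ)) + (j + 1)) ((i (j + 1) : ℝ) + 1)

/-- Extend a `Fin M`-indexed multi-index with values in `{0,…,N}` to `ℕ → ℕ`. -/
def toIdx {M N : ℕ} (i : Fin M → Fin (N + 1)) : ℕ → ℕ :=
  fun l => if h : l < M then (i ⟨l, h⟩ : ℕ) else 0

/-- Density of the hybrid interference `W_c = W_s + W_t` (Lemma 2 of the paper). -/
def wcPDF (α Θ : ℝ) (N M : ℕ) (ζ : ℕ → ℝ) (μt r : ℝ) (w : ℝ) : ℝ :=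
  if 0 ≤ w then
    ∑ i : Fin M → Fin (N + 1),
      Ccoef α ζ M (toIdx i) *
        (r ^ μt * betaFn (ΛIdx M (toIdx i)) μt / Real.Gamma μt) *
        w ^ ((ΛIdx M (toIdx i) : ℝ) + μt - 1) * Real.exp (-r * w) *
        oneF1 (ΛIdx M (toIdx i)) ((ΛIdx M (toIdx i) : ℝ) + μt) (-(Θ - r) * w)
  else 0

/-- The interference sum appearing in Theorem 1 / Appendix A of the paper:
`Σ_i C_i·(r^{μ_t}·B(μ_t,Λ(i))/Γ(μ_t))·Γ(Λ(i)+μ_t+q)·(c+r)^{−(Λ(i)+μ_t+q)}·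
  ₂F₁(Λ(i), Λ(i)+μ_t+q; Λ(i)+μ_t; −(Θ−r)/(c+r))`. -/
def interfSum (α Θ : ℝ) (N M : ℕ) (ζ : ℕ → ℝ) (μt r : ℝ) (q : ℕ) (c : ℝ) : ℝ :=
  ∑ i : Fin M → Fin (N + 1),
    Ccoef α ζ M (toIdx i) * (r ^ μt * betaFn μt (ΛIdx M (toIdx i)) / Real.Gamma μt) *
      Real.Gamma ((ΛIdx M (toIdx i) : ℝ) + μt + q) *
      (c + r) ^ (-((ΛIdx M (toIdx i) : ℝ) + μt + q)) *
      twoF1 (ΛIdx M (toIdx i)) ((ΛIdx M (toIdx i) : ℝ) + μt + q) ((ΛIdx M (toIdx i) : ℝ) + μt)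
        (-(Θ - r) / (c + r))

open Set Topology

/-! The pairs `(Z k, V k)` are independent of each other and of the interference `W`, so
conditioning on `W` writes the outage probability as `E[∏ₖ φₖ(γ(1 + W)/η)]` with
`φₖ(τ) = P(min (Z k) (V k) < τ)`. The SR density is bounded near `0`, so `P(Z k < τ) = O(τ)`,
which is `o(τ^m)` because `m < 1`; the Gamma density is squeezed between `e^(-bτ) b^m x^(m-1)/Γ(m)`
and `b^m x^(m-1)/Γ(m)` on `(0, τ)` (with `b = m/Ωb`), so `P(V k < τ) ~ b^m τ^m / Γ(m + 1)`. The
terrestrial link therefore dominates, `φₖ(τ) ~ b^m τ^m / Γ(m + 1)` and `φₖ(τ) ≤ C τ^m`. Hence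
`η^(mK) ∏ₖ φₖ(γ(1 + W)/η)` is dominated by a multiple of `(1 + W)^(mK)` and converges pointwise to
`(b^m/Γ(m + 1))^K (γ(1 + W))^(mK)`; dominated convergence concludes. -/

section SmallBallAsymptotics

variable {F : ℝ → ℝ} {m L : ℝ}

lemma tendsto_div_rpow_nhdsGT_zero_of_le_mul {A : ℝ} (hm : m < 1)
    (hF0 : ∀ τ, 0 < τ → 0 ≤ F τ) (hFA : ∀ τ, 0 < τ → τ ≤ 1 → F τ ≤ A * τ) :
    Tendsto (fun τ => F τ / τ ^ m) (𝓝[>] 0) (𝓝 0) := by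
  have hupper : Tendsto (fun τ : ℝ => A * τ ^ (1 - m)) (𝓝[>] 0) (𝓝 0) := by
    have h := ((continuous_id.rpow_const fun _ =>
      Or.inr (by linarith : (0:ℝ) ≤ 1 - m)).tendsto 0).const_mul A
    simpa [Real.zero_rpow (by linarith : (1 - m) ≠ 0)] using h.mono_left nhdsWithin_le_nhds
  refine tendsto_of_tendsto_of_tendsto_of_le_of_le' tendsto_const_nhds hupper ?_ ?_
  · filter_upwards [self_mem_nhdsWithin] with τ (hτ : 0 < τ)
    exact div_nonneg (hF0 τ hτ) (Real.rpow_nonneg hτ.le _)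
  · filter_upwards [Ioo_mem_nhdsGT (zero_lt_one' ℝ)] with τ ⟨hτ0, hτ1⟩
    rw [div_le_iff₀ (Real.rpow_pos_of_pos hτ0 m), mul_assoc, ← Real.rpow_add hτ0,
      sub_add_cancel, Real.rpow_one]
    exact hFA τ hτ0 hτ1.le

lemma exists_le_mul_rpow_of_tendsto_div_rpow (hm : 0 ≤ m) (hF1 : ∀ τ, F τ ≤ 1)
    (hF : Tendsto (fun τ => F τ / τ ^ m) (𝓝[>] 0) (𝓝 L)) :
    ∃ C, ∀ τ, 0 < τ → F τ ≤ C * τ ^ m := by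
  obtain ⟨δ, hδ, hδF⟩ := (mem_nhdsGT_iff_exists_Ioo_subset.1
    (hF.eventually (eventually_lt_nhds (lt_add_one L))))
  have hδm : 0 < δ ^ m := Real.rpow_pos_of_pos hδ m
  refine ⟨max (L + 1) (δ ^ m)⁻¹, fun τ hτ => ?_⟩
  have hτm : 0 < τ ^ m := Real.rpow_pos_of_pos hτ m
  rcases lt_or_ge τ δ with hτδ | hδτ
  · have h := (div_lt_iff₀ hτm).1 (hδF ⟨hτ, hτδ⟩)
    nlinarith [le_max_left (L + 1) (δ ^ m)⁻¹]
  · have h : δ ^ m ≤ τ ^ m := Real.rpow_le_rpow hδ.le hδτ hm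
    calc F τ ≤ (δ ^ m)⁻¹ * δ ^ m := by rw [inv_mul_cancel₀ hδm.ne']; exact hF1 τ
      _ ≤ max (L + 1) (δ ^ m)⁻¹ * τ ^ m := by gcongr; exact le_max_right _ _

lemma tendsto_rpow_mul_comp_div_atTop (hF : Tendsto (fun τ => F τ / τ ^ m) (𝓝[>] 0) (𝓝 L))
    {c : ℝ} (hc : 0 < c) :
    Tendsto (fun η : ℝ => η ^ m * F (c / η)) atTop (𝓝 (c ^ m * L)) := by
  have hcη : Tendsto (fun η : ℝ => c / η) atTop (𝓝[>] 0) :=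
    tendsto_nhdsWithin_iff.2 ⟨tendsto_const_nhds.div_atTop tendsto_id,
      (eventually_gt_atTop 0).mono fun η hη => div_pos hc hη⟩
  refine ((hF.comp hcη).const_mul (c ^ m)).congr' ?_
  filter_upwards [eventually_gt_atTop 0] with η hη
  simp only [Function.comp_apply, Real.div_rpow hc.le hη.le]
  field_simp [(Real.rpow_pos_of_pos hη m).ne']

end SmallBallAsymptotics

lemma srPDF_of_neg {α Θ : ℝ} {N : ℕ} {ζ : ℕ → ℝ} : ∀ x < 0, srPDF α Θ N ζ x = 0 :=
  fun _ hx => if_neg hx.not_ge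

lemma gammaPDF_of_neg {a b : ℝ} : ∀ x < 0, _root_.gammaPDF a b x = 0 :=
  fun _ hx => if_neg hx.not_ge

lemma bddAbove_srPDF_image_Icc (α Θ : ℝ) (N : ℕ) (ζ : ℕ → ℝ) :
    BddAbove (srPDF α Θ N ζ '' Icc 0 1) := by
  have hEq : EqOn (srPDF α Θ N ζ)
      (fun x => α * ∑ κ ∈ Finset.range (N + 1), ζ κ * x ^ κ * Real.exp (-Θ * x)) (Icc 0 1) :=
    fun x hx => if_pos hx.1
  rw [hEq.image_eq]
  exact isCompact_Icc.bddAbove_image (by fun_prop)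

section DensityCDF

variable {f : ℝ → ℝ} {τ : ℝ}

lemma withDensity_Iio_eq_setLIntegral_Ioo (hf : ∀ x < 0, f x = 0) (hτ : 0 ≤ τ) :
    volume.withDensity (fun x => ENNReal.ofReal (f x)) (Iio τ)
      = ∫⁻ x in Ioo 0 τ, ENNReal.ofReal (f x) := by
  have hneg : ∫⁻ x in Iio 0, ENNReal.ofReal (f x) = 0 :=
    setLIntegral_eq_zero measurableSet_Iio fun x hx => by simp [hf x hx]
  rw [withDensity_apply _ measurableSet_Iio, ← Iio_union_Ico_eq_Iio hτ,
    lintegral_union measurableSet_Ico ((Iio_disjoint_Ici le_rfl).mono_right Ico_subset_Ici_self),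
    hneg, zero_add, setLIntegral_congr Ioo_ae_eq_Ico.symm]

lemma setLIntegral_Ioo_ofReal_mul_rpow {m a : ℝ} (hm : 0 < m) (ha : 0 ≤ a) (hτ : 0 < τ) :
    ∫⁻ x in Ioo 0 τ, ENNReal.ofReal (a * x ^ (m - 1)) = ENNReal.ofReal (a * τ ^ m / m) := by
  have hint : IntegrableOn (fun x : ℝ => a * x ^ (m - 1)) (Ioc 0 τ) :=
    (intervalIntegral.intervalIntegrable_rpow' (by linarith)).1.const_mul a
  rw [← ofReal_integral_eq_lintegral_ofReal (hint.mono_set Ioo_subset_Ioc_self)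
      ((ae_restrict_mem measurableSet_Ioo).mono fun x hx =>
        mul_nonneg ha (Real.rpow_nonneg hx.1.le _)),
    setIntegral_congr_set Ioo_ae_eq_Ioc, ← intervalIntegral.integral_of_le hτ.le,
    intervalIntegral.integral_const_mul, integral_rpow (Or.inl (by linarith)), sub_add_cancel,
    Real.zero_rpow hm.ne', sub_zero, mul_div_assoc]

lemma withDensity_Iio_le_of_le {B : ℝ} (hf : ∀ x < 0, f x = 0) (hB : ∀ x ∈ Icc 0 1, f x ≤ B)
    (hτ0 : 0 < τ) (hτ1 : τ ≤ 1) :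
    volume.withDensity (fun x => ENNReal.ofReal (f x)) (Iio τ) ≤ ENNReal.ofReal (B * τ) := by
  rw [withDensity_Iio_eq_setLIntegral_Ioo hf hτ0.le, ENNReal.ofReal_mul' hτ0.le,
    ← sub_zero τ, ← Real.volume_Ioo, ← setLIntegral_const, sub_zero]
  exact setLIntegral_mono' measurableSet_Ioo fun x hx =>
    ENNReal.ofReal_le_ofReal (hB x ⟨hx.1.le, hx.2.le.trans hτ1⟩)

lemma withDensity_Iio_le_of_le_rpow {m a : ℝ} (hf : ∀ x < 0, f x = 0) (hm : 0 < m) (ha : 0 ≤ a)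
    (hτ : 0 < τ) (hfa : ∀ x ∈ Ioo 0 τ, f x ≤ a * x ^ (m - 1)) :
    volume.withDensity (fun x => ENNReal.ofReal (f x)) (Iio τ)
      ≤ ENNReal.ofReal (a * τ ^ m / m) := by
  rw [withDensity_Iio_eq_setLIntegral_Ioo hf hτ.le, ← setLIntegral_Ioo_ofReal_mul_rpow hm ha hτ]
  exact setLIntegral_mono' measurableSet_Ioo fun x hx => ENNReal.ofReal_le_ofReal (hfa x hx)

lemma le_withDensity_Iio_of_rpow_le {m a : ℝ} (hf : ∀ x < 0, f x = 0) (hm : 0 < m) (ha : 0 ≤ a)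
    (hτ : 0 < τ) (hfa : ∀ x ∈ Ioo 0 τ, a * x ^ (m - 1) ≤ f x) :
    ENNReal.ofReal (a * τ ^ m / m)
      ≤ volume.withDensity (fun x => ENNReal.ofReal (f x)) (Iio τ) := by
  rw [withDensity_Iio_eq_setLIntegral_Ioo hf hτ.le, ← setLIntegral_Ioo_ofReal_mul_rpow hm ha hτ]
  exact setLIntegral_mono' measurableSet_Ioo fun x hx => ENNReal.ofReal_le_ofReal (hfa x hx)

lemma tendsto_withDensity_Iio_div_rpow_zero {m : ℝ} (hf : ∀ x < 0, f x = 0)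
    (hB : BddAbove (f '' Icc 0 1)) (hm : m < 1) :
    Tendsto (fun τ => (volume.withDensity (fun x => ENNReal.ofReal (f x)) (Iio τ)).toReal / τ ^ m)
      (𝓝[>] 0) (𝓝 0) := by
  obtain ⟨B, hB⟩ := hB
  refine tendsto_div_rpow_nhdsGT_zero_of_le_mul (A := max B 0) hm (fun _ _ => ENNReal.toReal_nonneg)
    fun τ hτ0 hτ1 => ENNReal.toReal_le_of_le_ofReal (by positivity) ?_
  exact withDensity_Iio_le_of_le hf
    (fun x hx => (hB (mem_image_of_mem f hx)).trans (le_max_left B 0)) hτ0 hτ1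

lemma gammaPDF_of_nonneg {a b x : ℝ} (hx : 0 ≤ x) :
    _root_.gammaPDF a b x = Real.exp (-b * x) * (b ^ a / Real.Gamma a * x ^ (a - 1)) := by
  rw [_root_.gammaPDF, if_pos hx]
  ring

lemma tendsto_gammaCDF_div_rpow {m b : ℝ} (hm : 0 < m) (hb : 0 < b) :
    Tendsto (fun τ => (volume.withDensity (fun x => ENNReal.ofReal (_root_.gammaPDF m b x))
      (Iio τ)).toReal / τ ^ m) (𝓝[>] 0) (𝓝 (b ^ m / Real.Gamma (m + 1))) := by
  set ν := volume.withDensity (fun x => ENNReal.ofReal (_root_.gammaPDF m b x))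
  set a := b ^ m / Real.Gamma m
  have ha : 0 < a := by have := Real.Gamma_pos_of_pos hm; positivity
  have hbounds (τ : ℝ) (hτ : 0 < τ) :
      Real.exp (-b * τ) * a * τ ^ m / m ≤ (ν (Iio τ)).toReal ∧
        (ν (Iio τ)).toReal ≤ a * τ ^ m / m := by
    have hpow (x : ℝ) (hx : x ∈ Ioo 0 τ) : 0 ≤ a * x ^ (m - 1) :=
      mul_nonneg ha.le (Real.rpow_nonneg hx.1.le _)
    have hupper := withDensity_Iio_le_of_le_rpow gammaPDF_of_neg hm ha.le hτ fun x hx => by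
      rw [gammaPDF_of_nonneg (a := m) (b := b) hx.1.le]
      exact mul_le_of_le_one_left (hpow x hx) (Real.exp_le_one_iff.2 (by nlinarith [hx.1]))
    have hlower := le_withDensity_Iio_of_rpow_le (a := Real.exp (-b * τ) * a) gammaPDF_of_neg hm
      (by positivity) hτ fun x hx => by
        rw [gammaPDF_of_nonneg (a := m) (b := b) hx.1.le, mul_assoc]
        exact mul_le_mul_of_nonneg_right (Real.exp_le_exp.2 (by nlinarith [hx.2])) (hpow x hx)
    exact ⟨(ENNReal.ofReal_le_iff_le_toReal (ne_top_of_le_ne_top ENNReal.ofReal_ne_top hupper)).1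
      hlower, ENNReal.toReal_le_of_le_ofReal (by positivity) hupper⟩
  have hexp : Tendsto (fun τ : ℝ => Real.exp (-b * τ) * (a / m)) (𝓝[>] 0) (𝓝 (a / m)) := by
    have h : Continuous fun τ : ℝ => Real.exp (-b * τ) * (a / m) := by fun_prop
    simpa using (h.tendsto 0).mono_left nhdsWithin_le_nhds
  rw [show b ^ m / Real.Gamma (m + 1) = a / m by rw [Real.Gamma_add_one hm.ne']; ring]
  refine tendsto_of_tendsto_of_tendsto_of_le_of_le' hexp tendsto_const_nhds ?_ ?_
  all_goals filter_upwards [self_mem_nhdsWithin] with τ (hτ : 0 < τ)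
  · rw [le_div_iff₀ (Real.rpow_pos_of_pos hτ m)]
    exact (le_of_eq (by ring)).trans (hbounds τ hτ).1
  · rw [div_le_iff₀ (Real.rpow_pos_of_pos hτ m)]
    exact (hbounds τ hτ).2.trans (le_of_eq (by ring))

end DensityCDF

section Probability

variable {Ω : Type*} [MeasurableSpace Ω] {P : Measure Ω}

lemma HasDensity.measure_preimage {X : Ω → ℝ} {f : ℝ → ℝ} (h : HasDensity P X f)
    (hX : Measurable X) {s : Set ℝ} (hs : MeasurableSet s) :
    P (X ⁻¹' s) = volume.withDensity (fun x => ENNReal.ofReal (f x)) s := by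
  rw [← Measure.map_apply hX hs, h]

lemma HasDensity.ae_nonneg {X : Ω → ℝ} {f : ℝ → ℝ} (h : HasDensity P X f) (hX : Measurable X)
    (hf : ∀ x < 0, f x = 0) : ∀ᵐ ω ∂P, 0 ≤ X ω := by
  rw [ae_iff]
  simp only [not_le]
  change P (X ⁻¹' Iio 0) = 0
  rw [h.measure_preimage hX measurableSet_Iio, withDensity_apply _ measurableSet_Iio]
  exact setLIntegral_eq_zero measurableSet_Iio fun x hx => by simp [hf x hx]

lemma measurable_measure_setOf_lt (f : Ω → ℝ) : Measurable fun τ => P {ω | f ω < τ} :=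
  Monotone.measurable fun _ _ hab => measure_mono fun _ h => lt_of_lt_of_le h hab

lemma tendsto_measure_min_lt_div_rpow [IsFiniteMeasure P] {X Y : Ω → ℝ} {m L : ℝ}
    (hX : Tendsto (fun τ => (P (X ⁻¹' Iio τ)).toReal / τ ^ m) (𝓝[>] 0) (𝓝 0))
    (hY : Tendsto (fun τ => (P (Y ⁻¹' Iio τ)).toReal / τ ^ m) (𝓝[>] 0) (𝓝 L)) :
    Tendsto (fun τ => (P {ω | min (X ω) (Y ω) < τ}).toReal / τ ^ m) (𝓝[>] 0) (𝓝 L) := by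
  have hunion : ∀ τ, {ω | min (X ω) (Y ω) < τ} = X ⁻¹' Iio τ ∪ Y ⁻¹' Iio τ := fun τ => by
    ext ω; simp
  refine tendsto_of_tendsto_of_tendsto_of_le_of_le' hY (by simpa using hX.add hY) ?_ ?_
  all_goals filter_upwards [self_mem_nhdsWithin] with τ (hτ : 0 < τ)
  all_goals rw [hunion]
  · gcongr
    · exact measure_ne_top _ _
    · exact subset_union_right
  · rw [← add_div, ← ENNReal.toReal_add (measure_ne_top _ _) (measure_ne_top _ _)]
    gcongr
    · exact ENNReal.add_ne_top.2 ⟨measure_ne_top _ _, measure_ne_top _ _⟩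
    · exact measure_union_le _ _

lemma tendsto_measure_min_lt_div_rpow_of_hasDensity [IsFiniteMeasure P] {X Y : Ω → ℝ}
    (hX : Measurable X) (hY : Measurable Y) {α Θ : ℝ} {N : ℕ} {ζ : ℕ → ℝ} {m b : ℝ}
    (hdX : HasDensity P X (srPDF α Θ N ζ)) (hdY : HasDensity P Y (_root_.gammaPDF m b))
    (hm0 : 0 < m) (hm1 : m < 1) (hb : 0 < b) :
    Tendsto (fun τ => (P {ω | min (X ω) (Y ω) < τ}).toReal / τ ^ m) (𝓝[>] 0)
      (𝓝 (b ^ m / Real.Gamma (m + 1))) := by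
  refine tendsto_measure_min_lt_div_rpow ?_ ?_
  · simp_rw [hdX.measure_preimage hX measurableSet_Iio]
    exact tendsto_withDensity_Iio_div_rpow_zero srPDF_of_neg (bddAbove_srPDF_image_Icc _ _ _ _) hm1
  · simp_rw [hdY.measure_preimage hY measurableSet_Iio]
    exact tendsto_gammaCDF_div_rpow hm0 hb

end Probability

namespace ProbabilityTheory

variable {Ω : Type*} [MeasurableSpace Ω] {P : Measure Ω} {β : Type*} [MeasurableSpace β]

lemma iIndepFun.indepFun_inl_inr {ι κ : Type*} [Fintype ι] [Fintype κ] {f : ι ⊕ κ → Ω → β}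
    (hf : ∀ i, Measurable (f i)) (h : iIndepFun f P) :
    IndepFun (fun ω i => f (Sum.inl i) ω) (fun ω j => f (Sum.inr j) ω) P := by
  have := h.isProbabilityMeasure
  rw [indepFun_iff_map_prod_eq_prod_map_map (by fun_prop) (by fun_prop),
    (h.precomp Sum.inl_injective).map_fun_eq_pi_map (fun i => (hf _).aemeasurable),
    (h.precomp Sum.inr_injective).map_fun_eq_pi_map (fun i => (hf _).aemeasurable)]
  have hcomp : (fun ω => ((fun i => f (Sum.inl i) ω), fun j => f (Sum.inr j) ω))
      = MeasurableEquiv.sumPiEquivProdPi (fun _ => β) ∘ fun ω k => f k ω := rfl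
  rw [hcomp, ← Measure.map_map (MeasurableEquiv.measurable _) (by fun_prop),
    h.map_fun_eq_pi_map fun i => (hf i).aemeasurable,
    (measurePreserving_sumPiEquivProdPi _).map_eq]

lemma iIndepFun.prodMk_of_sumElim {ι : Type*} [Fintype ι] {X Y : ι → Ω → β}
    (hX : ∀ i, Measurable (X i)) (hY : ∀ i, Measurable (Y i)) (h : iIndepFun (Sum.elim X Y) P) :
    iIndepFun (fun i ω => (X i ω, Y i ω)) P := by
  have := h.isProbabilityMeasure
  have hXY : ∀ k, Measurable (Sum.elim X Y k) := Sum.forall.2 ⟨hX, hY⟩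
  have hpair : ∀ i, (P.map (X i)).prod (P.map (Y i)) = P.map fun ω => (X i ω, Y i ω) := fun i =>
    ((indepFun_iff_map_prod_eq_prod_map_map (hX i).aemeasurable (hY i).aemeasurable).1
      (h.indepFun Sum.inl_ne_inr)).symm
  have hcomp : (fun ω i => (X i ω, Y i ω)) = (MeasurableEquiv.arrowProdEquivProdArrow β β ι).symm ∘
      MeasurableEquiv.sumPiEquivProdPi (fun _ => β) ∘ fun ω k => Sum.elim X Y k ω := rfl
  rw [iIndepFun_iff_map_fun_eq_pi_map fun i => ((hX i).prodMk (hY i)).aemeasurable, hcomp,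
    ← Measure.map_map (by fun_prop) (by fun_prop), ← Measure.map_map (by fun_prop) (by fun_prop),
    h.map_fun_eq_pi_map fun k => (hXY k).aemeasurable,
    (measurePreserving_sumPiEquivProdPi _).map_eq,
    (measurePreserving_arrowProdEquivProdArrow β β ι _ _).symm.map_eq]
  exact congrArg Measure.pi (funext hpair)

lemma measure_forall_mem_eq_lintegral_prod {ι γ : Type*} [Fintype ι] [MeasurableSpace γ]
    {X : ι → Ω → β} {W : Ω → γ} (hX : ∀ i, Measurable (X i)) (hW : Measurable W)
    (hXi : iIndepFun X P) (hXW : IndepFun (fun ω i => X i ω) W P) {A : γ → Set β}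
    (hA : MeasurableSet {p : β × γ | p.1 ∈ A p.2}) :
    P {ω | ∀ i, X i ω ∈ A (W ω)} = ∫⁻ ω, ∏ i, P (X i ⁻¹' A (W ω)) ∂P := by
  have := hXi.isProbabilityMeasure
  set S : Set ((ι → β) × γ) := {q | ∀ i, q.1 i ∈ A q.2}
  have hS : MeasurableSet S := by
    simp only [S, ofPred_forall]
    exact MeasurableSet.iInter fun i =>
      hA.preimage (by fun_prop : Measurable fun q : (ι → β) × γ => (q.1 i, q.2))
  have hXv : Measurable fun ω i => X i ω := measurable_pi_lambda _ hX
  calc P {ω | ∀ i, X i ω ∈ A (W ω)} = P.map (fun ω => ((fun i => X i ω), W ω)) S :=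
        (Measure.map_apply (hXv.prodMk hW) hS).symm
    _ = ∫⁻ w, P.map (fun ω i => X i ω) ((fun x => (x, w)) ⁻¹' S) ∂(P.map W) := by
        rw [hXW.map_prod_eq_prod_map_map hXv.aemeasurable hW.aemeasurable,
          Measure.prod_apply_symm hS]
    _ = ∫⁻ ω, P.map (fun ω i => X i ω) ((fun x => (x, W ω)) ⁻¹' S) ∂P :=
        lintegral_map (measurable_measure_prodMk_right hS) hW
    _ = ∫⁻ ω, ∏ i, P (X i ⁻¹' A (W ω)) ∂P := by
        refine lintegral_congr fun ω => ?_
        rw [Measure.map_apply hXv (measurable_prodMk_right hS)]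
        convert hXi.meas_iInter fun i =>
          ⟨A (W ω), hA.preimage (measurable_id.prodMk measurable_const), rfl⟩ using 2
        ext; simp [S]

lemma rpow_mul_measure_forall_min_lt_eq_integral {ι : Type*} [Fintype ι] {X Y : ι → Ω → ℝ}
    {c : Ω → ℝ} (hX : ∀ i, Measurable (X i)) (hY : ∀ i, Measurable (Y i)) (hc : Measurable c)
    (hXY : iIndepFun (fun i ω => (X i ω, Y i ω)) P)
    (hXYc : IndepFun (fun ω i => (X i ω, Y i ω)) c P) (m : ℝ) {η : ℝ} (hη : 0 < η) :
    η ^ (m * Fintype.card ι) * (P {ω | ∀ i, min (η * X i ω) (η * Y i ω) < c ω}).toReal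
      = ∫ ω, ∏ i, η ^ m * (P {ω' | min (X i ω') (Y i ω') < c ω / η}).toReal ∂P := by
  have := hXY.isProbabilityMeasure
  have hevent : {ω | ∀ i, min (η * X i ω) (η * Y i ω) < c ω}
      = {ω | ∀ i, (X i ω, Y i ω) ∈ {p : ℝ × ℝ | min p.1 p.2 < c ω / η}} := by
    ext ω
    simp only [mem_ofPred_eq, ← mul_min_of_nonneg _ _ hη.le, lt_div_iff₀' hη]
  have hA : MeasurableSet {q : (ℝ × ℝ) × ℝ | min q.1.1 q.1.2 < q.2 / η} :=
    measurableSet_lt (by fun_prop) (by fun_prop)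
  rw [hevent, measure_forall_mem_eq_lintegral_prod (fun i => (hX i).prodMk (hY i)) hc hXY hXYc
    (A := fun w => {p : ℝ × ℝ | min p.1 p.2 < w / η}) hA, ← integral_toReal,
    ← integral_const_mul]
  · refine integral_congr_ae (ae_of_all _ fun ω => ?_)
    simp only [ENNReal.toReal_prod, Finset.prod_mul_distrib, Finset.prod_const, Finset.card_univ,
      Real.rpow_mul_natCast hη.le]
    rfl
  · exact (Finset.measurable_prod _ fun i _ =>
      (measurable_measure_setOf_lt _).comp (hc.div_const η)).aemeasurable
  · exact ae_of_all _ fun ω => ENNReal.prod_lt_top fun _ _ => measure_lt_top _ _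

end ProbabilityTheory

lemma tendsto_integral_prod_rpow_mul_comp_div {Ω ι : Type*} [MeasurableSpace Ω] {P : Measure Ω}
    [Fintype ι] {φ : ι → ℝ → ℝ} {m L : ℝ} (hm : 0 ≤ m) (hφm : ∀ i, Measurable (φ i))
    (hφ0 : ∀ i τ, 0 ≤ φ i τ) (hφ1 : ∀ i τ, φ i τ ≤ 1)
    (hφ : ∀ i, Tendsto (fun τ => φ i τ / τ ^ m) (𝓝[>] 0) (𝓝 L))
    {c : Ω → ℝ} (hc : Measurable c) (hc0 : ∀ᵐ ω ∂P, 0 < c ω)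
    (hint : Integrable (fun ω => c ω ^ (m * Fintype.card ι)) P) :
    Tendsto (fun η : ℝ => ∫ ω, ∏ i, η ^ m * φ i (c ω / η) ∂P) atTop
      (𝓝 (L ^ Fintype.card ι * ∫ ω, c ω ^ (m * Fintype.card ι) ∂P)) := by
  choose C hC using fun i => exists_le_mul_rpow_of_tendsto_div_rpow hm (hφ1 i) (hφ i)
  rw [← integral_const_mul]
  refine tendsto_integral_filter_of_dominated_convergence
    (fun ω => (∏ i, C i) * c ω ^ (m * Fintype.card ι))
    (Eventually.of_forall fun η => (Finset.measurable_prod _ fun i _ =>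
      ((hφm i).comp (hc.div_const η)).const_mul _).aestronglyMeasurable) ?_ (hint.const_mul _) ?_
  · filter_upwards [eventually_gt_atTop 0] with η hη
    filter_upwards [hc0] with ω hω
    have hfac : ∀ i, 0 ≤ η ^ m * φ i (c ω / η) := fun i =>
      mul_nonneg (Real.rpow_nonneg hη.le m) (hφ0 i _)
    rw [Real.norm_of_nonneg (Finset.prod_nonneg fun i _ => hfac i), Real.rpow_mul_natCast hω.le,
      ← Finset.card_univ, ← Finset.prod_const, ← Finset.prod_mul_distrib]
    refine Finset.prod_le_prod (fun i _ => hfac i) fun i _ => ?_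
    calc η ^ m * φ i (c ω / η) ≤ η ^ m * (C i * (c ω / η) ^ m) :=
          mul_le_mul_of_nonneg_left (hC i _ (div_pos hω hη)) (Real.rpow_nonneg hη.le m)
      _ = C i * c ω ^ m := by
          rw [Real.div_rpow hω.le hη.le]
          field_simp [(Real.rpow_pos_of_pos hη m).ne']
  · filter_upwards [hc0] with ω hω
    rw [Real.rpow_mul_natCast hω.le, ← Finset.card_univ, ← mul_pow, ← Finset.prod_const]
    exact tendsto_finsetProd _ fun i _ => by
      simpa only [mul_comm L] using tendsto_rpow_mul_comp_div_atTop (hφ i) hω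

theorem satellite_asymptotic_case2_fixed_interference_general
    {Ω : Type*} [MeasurableSpace Ω] (P : Measure Ω) [IsProbabilityMeasure P]
    (K : ℕ) (γ : ℝ) (hγ : 0 < γ)
    (α Θa : ℝ) (Na : ℕ) (ζa : ℕ → ℝ)
    (m : ℝ) (hm0 : 0 < m) (hm1 : m < 1) (Ωb : ℝ) (hΩb : 0 < Ωb)
    (M : ℕ) (αs Θs : ℝ) (Ns : ℕ) (ζs : ℕ → ℝ)
    (μt r : ℝ)
    (Z V : Fin K → Ω → ℝ) (Λi : Fin M → Ω → ℝ) (T W : Ω → ℝ)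
    (hmZ : ∀ k, Measurable (Z k)) (hmV : ∀ k, Measurable (V k))
    (hmΛ : ∀ j, Measurable (Λi j)) (hmT : Measurable T)
    (hdZ : ∀ k, HasDensity P (Z k) (srPDF α Θa Na ζa))
    (hdV : ∀ k, HasDensity P (V k) (gammaPDF m (m / Ωb)))
    (hdΛ : ∀ j, HasDensity P (Λi j) (srPDF αs Θs Ns ζs))
    (hdT : HasDensity P T (gammaPDF μt r))
    (hW : W = fun ω => (∑ j, Λi j ω) + T ω)
    (hIndep : iIndepFun
      (Sum.elim (Sum.elim Z V) (Sum.elim Λi (fun _ : Unit => T)) :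
        (Fin K ⊕ Fin K) ⊕ (Fin M ⊕ Unit) → Ω → ℝ) P)
    (hInt : Integrable (fun ω => (1 + W ω) ^ (m * K)) P) :
    Filter.Tendsto (fun η : ℝ => η ^ (m * K) *
        (P {ω | ∀ k, min (η * Z k ω) (η * V k ω) < γ * (1 + W ω)}).toReal)
      Filter.atTop
      (nhds ((1 / Real.Gamma (m + 1)) ^ K * (m * γ / Ωb) ^ (m * K) *
        ∫ ω, (1 + W ω) ^ (m * K) ∂P)) := by
  have hmW : Measurable W := hW ▸ (Finset.measurable_sum _ fun j _ => hmΛ j).add hmT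
  have hW0 : ∀ᵐ ω ∂P, 0 ≤ W ω := by
    filter_upwards [ae_all_iff.2 fun j => (hdΛ j).ae_nonneg (hmΛ j) srPDF_of_neg,
      hdT.ae_nonneg hmT gammaPDF_of_neg] with ω hΛ hT
    rw [hW]
    exact add_nonneg (Finset.sum_nonneg fun j _ => hΛ j) hT
  have hpairs := (hIndep.precomp Sum.inl_injective).prodMk_of_sumElim hmZ hmV
  have hpairsW : IndepFun (fun ω k => (Z k ω, V k ω)) (fun ω => γ * (1 + W ω)) P := by
    have h := hIndep.indepFun_inl_inr (Sum.forall.2 ⟨Sum.forall.2 ⟨hmZ, hmV⟩,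
      Sum.forall.2 ⟨hmΛ, fun _ => hmT⟩⟩)
    rw [hW]
    exact h.comp (φ := fun (x : Fin K ⊕ Fin K → ℝ) k => (x (Sum.inl k), x (Sum.inr k)))
      (ψ := fun (y : Fin M ⊕ Unit → ℝ) => γ * (1 + (∑ j, y (Sum.inl j) + y (Sum.inr ()))))
      (by fun_prop) (by fun_prop)
  have hpow : ∀ᵐ ω ∂P, (γ * (1 + W ω)) ^ (m * K) = γ ^ (m * K) * (1 + W ω) ^ (m * K) :=
    hW0.mono fun ω hω => Real.mul_rpow hγ.le (by linarith)
  have hlim := tendsto_integral_prod_rpow_mul_comp_div hm0.le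
    (fun _ => (measurable_measure_setOf_lt _).ennreal_toReal) (fun _ _ => ENNReal.toReal_nonneg)
    (fun _ _ => ENNReal.toReal_le_of_le_ofReal zero_le_one (by simpa using prob_le_one))
    (fun k => tendsto_measure_min_lt_div_rpow_of_hasDensity (hmZ k) (hmV k) (hdZ k) (hdV k) hm0
      hm1 (by positivity)) (c := fun ω => γ * (1 + W ω)) (by fun_prop)
    (hW0.mono fun ω hω => by positivity)
    (by simpa only [Fintype.card_fin] using (hInt.const_mul _).congr (hpow.mono fun _ h => h.symm))
  simp only [Fintype.card_fin, integral_congr_ae hpow, integral_const_mul] at hlim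
  have hconst : ((m / Ωb) ^ m / Real.Gamma (m + 1)) ^ K * γ ^ (m * K)
      = (1 / Real.Gamma (m + 1)) ^ K * (m * γ / Ωb) ^ (m * K) := by
    rw [div_pow, ← Real.rpow_mul_natCast (by positivity), mul_div_right_comm m,
      Real.mul_rpow (by positivity) hγ.le]
    ring
  rw [← hconst, mul_assoc]
  refine hlim.congr' ((eventually_gt_atTop 0).mono fun η hη => ?_)
  simpa using (rpow_mul_measure_forall_min_lt_eq_integral hmZ hmV (by fun_prop) hpairs hpairsW m
    hη).symm

/-- Corollary 3 of the paper, Case 2 with `m_cb < 1`: for terrestrial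
Nakagami parameter `0 < m < 1` the satellite network achieves diversity order `m·K`:
`lim_{η→∞} η^{mK}·Pr[max_k min(ηZ_k, ηV_k) < γ̃(1+W_c)]
  = (1/Γ(m+1))^K·(mγ̃/Ω)^{mK}·E[(1+W_c)^{mK}]`. -/
theorem satellite_asymptotic_case2_fixed_interference
    {Ω : Type*} [MeasurableSpace Ω] (P : Measure Ω) [IsProbabilityMeasure P]
    (K : ℕ) (hK : 1 ≤ K) (γ : ℝ) (hγ : 0 < γ)
    (α Θa : ℝ) (hα : 0 < α) (hΘa : 0 < Θa) (Na : ℕ) (ζa : ℕ → ℝ) (hζa0 : ζa 0 = 1)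
    (m : ℝ) (hm0 : 0 < m) (hm1 : m < 1) (Ωb : ℝ) (hΩb : 0 < Ωb)
    (M : ℕ) (hM : 1 ≤ M) (αs Θs : ℝ) (hαs : 0 < αs) (hΘs : 0 < Θs) (Ns : ℕ) (ζs : ℕ → ℝ)
    (μt r : ℝ) (hμt : 0 < μt) (hr : 0 < r)
    (Z V : Fin K → Ω → ℝ) (Λi : Fin M → Ω → ℝ) (T W : Ω → ℝ)
    (hmZ : ∀ k, Measurable (Z k)) (hmV : ∀ k, Measurable (V k))
    (hmΛ : ∀ j, Measurable (Λi j)) (hmT : Measurable T)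
    (hdZ : ∀ k, HasDensity P (Z k) (srPDF α Θa Na ζa))
    (hdV : ∀ k, HasDensity P (V k) (gammaPDF m (m / Ωb)))
    (hdΛ : ∀ j, HasDensity P (Λi j) (srPDF αs Θs Ns ζs))
    (hdT : HasDensity P T (gammaPDF μt r))
    (hW : W = fun ω => (∑ j, Λi j ω) + T ω)
    (hIndep : iIndepFun
      (Sum.elim (Sum.elim Z V) (Sum.elim Λi (fun _ : Unit => T)) :
        (Fin K ⊕ Fin K) ⊕ (Fin M ⊕ Unit) → Ω → ℝ) P)
    (hInt : Integrable (fun ω => (1 + W ω) ^ (m * K)) P) :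
    Filter.Tendsto (fun η : ℝ => η ^ (m * K) *
        (P {ω | ∀ k, min (η * Z k ω) (η * V k ω) < γ * (1 + W ω)}).toReal)
      Filter.atTop
      (nhds ((1 / Real.Gamma (m + 1)) ^ K * (m * γ / Ωb) ^ (m * K) *
        ∫ ω, (1 + W ω) ^ (m * K) ∂P)) :=
  satellite_asymptotic_case2_fixed_interference_general P K γ hγ α Θa Na ζa m hm0 hm1 Ωb hΩb M αs Θs
    Ns ζs μt r Z V Λi T W hmZ hmV hmΛ hmT hdZ hdV hdΛ hdT hW hIndep hInt

end
end

section
/- Let V be Gamma(m, m/Ω)-distributed with m > 0, Ω > 0, and let W_c be an independent nonnegative random variable with E[(1+W_c)^m] < ∞ (in the paper, W_c is the hybrid interference of Lemma 2). Then for every c > 0: lim_{η→∞} η^m · Pr[η·V < c·(1+W_c)] = (1/Γ(m+1))·(m·c/Ω)^m · E[(1+W_c)^m]. In particular, when γ_s < 1/μ' the IoT network's lower-bound outage probability decays at rate η^{−m_cd}, giving diversity order m_cd (the first branch of Corollaries 5 and 7 of the paper, with c = γ_s/(1−μ)). -/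
open MeasureTheory ProbabilityTheory Real Filter

noncomputable section

lemma key_integral {m b t : ℝ} (hm : 0 < m) (hb : 0 < b) (ht : 0 < t) :
    ∫⁻ x in Set.Ioo 0 t, ENNReal.ofReal (b ^ m / Real.Gamma m * x ^ (m - 1)) =
      ENNReal.ofReal ((b * t) ^ m / Real.Gamma (m + 1)) := by
  have hΓ : 0 < Real.Gamma m := Real.Gamma_pos_of_pos hm
  have hint : IntegrableOn (fun x : ℝ => x ^ (m - 1)) (Set.Ioo 0 t) volume := by
    have := (intervalIntegral.intervalIntegrable_rpow' (a := 0) (b := t) (by linarith : (-1:ℝ) < m - 1))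
    exact (this.1).mono_set Set.Ioo_subset_Ioc_self
  have hnn : 0 ≤ᵐ[volume.restrict (Set.Ioo 0 t)]
      (fun x : ℝ => b ^ m / Real.Gamma m * x ^ (m - 1)) := by
    filter_upwards [ae_restrict_mem measurableSet_Ioo] with x hx
    have : (0:ℝ) ≤ x := hx.1.le
    positivity
  rw [← ofReal_integral_eq_lintegral_ofReal (hint.const_mul _) hnn]
  congr 1
  open intervalIntegral in
  rw [MeasureTheory.integral_const_mul, ← integral_Ioc_eq_integral_Ioo,
    ← integral_of_le ht.le,
    integral_rpow (Or.inl (by linarith : (-1:ℝ) < m - 1))]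
  rw [sub_add_cancel, Real.zero_rpow hm.ne', Real.Gamma_add_one hm.ne',
    Real.mul_rpow hb.le ht.le]
  field_simp
  ring

lemma lintegral_Iio_eq {m b t : ℝ} (hm : 0 < m) (hb : 0 < b) (ht : 0 < t) :
    ∫⁻ x in Set.Iio t, ENNReal.ofReal (_root_.gammaPDF m b x) =
      ∫⁻ x in Set.Ioo 0 t, ENNReal.ofReal (_root_.gammaPDF m b x) := by
  have hae : (fun x => ENNReal.ofReal (_root_.gammaPDF m b x)) =ᵐ[volume.restrict (Set.Iio t)]
      (Set.Ioo 0 t).indicator (fun x => ENNReal.ofReal (_root_.gammaPDF m b x)) := by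
    have h0 : ∀ᵐ x : ℝ ∂(volume.restrict (Set.Iio t)), x ≠ 0 := by
      refine ae_restrict_of_ae ?_
      have : (volume : Measure ℝ) {(0:ℝ)} = 0 := measure_singleton 0
      exact eventually_of_mem (compl_mem_ae_iff.mpr this) (fun x hx => hx)
    filter_upwards [h0, ae_restrict_mem measurableSet_Iio] with x hx0 hxt
    rcases lt_or_gt_of_ne hx0 with h | h
    · have hx1 : x ∉ Set.Ioo 0 t := fun hc => absurd hc.1 (not_lt.mpr h.le)
      simp [Set.indicator, _root_.gammaPDF, not_le.mpr h, hx1]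
    · have : x ∈ Set.Ioo 0 t := ⟨h, hxt⟩
      simp [Set.indicator, this]
  rw [lintegral_congr_ae hae, lintegral_indicator measurableSet_Ioo,
    Measure.restrict_restrict measurableSet_Ioo,
    Set.inter_eq_self_of_subset_left (fun x hx => hx.2)]


section Bounds
open Set

lemma G_upper {m b t : ℝ} (hm : 0 < m) (hb : 0 < b) (ht : 0 < t) :
    ∫⁻ x in Set.Iio t, ENNReal.ofReal (_root_.gammaPDF m b x) ≤
      ENNReal.ofReal ((b * t) ^ m / Real.Gamma (m + 1)) := by
  rw [lintegral_Iio_eq hm hb ht, ← key_integral hm hb ht]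
  refine lintegral_mono_ae ?_
  filter_upwards [ae_restrict_mem measurableSet_Ioo] with x hx
  refine ENNReal.ofReal_le_ofReal ?_
  have hΓ : 0 < Real.Gamma m := Real.Gamma_pos_of_pos hm
  have hx0 : (0:ℝ) < x := hx.1
  have he : Real.exp (-b * x) ≤ 1 := Real.exp_le_one_iff.mpr (by nlinarith)
  have h2 : (0:ℝ) ≤ b ^ m * x ^ (m - 1) := by positivity
  rw [_root_.gammaPDF, if_pos hx0.le]
  calc b ^ m * x ^ (m - 1) * Real.exp (-b * x) / Real.Gamma m
      ≤ b ^ m * x ^ (m - 1) * 1 / Real.Gamma m := by gcongr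
    _ = b ^ m / Real.Gamma m * x ^ (m - 1) := by ring

lemma G_lower {m b t : ℝ} (hm : 0 < m) (hb : 0 < b) (ht : 0 < t) :
    ENNReal.ofReal (Real.exp (-(b * t)) * ((b * t) ^ m / Real.Gamma (m + 1))) ≤
      ∫⁻ x in Set.Iio t, ENNReal.ofReal (_root_.gammaPDF m b x) := by
  rw [lintegral_Iio_eq hm hb ht, ENNReal.ofReal_mul (Real.exp_nonneg _),
    ← key_integral hm hb ht, ← lintegral_const_mul' _ _ ENNReal.ofReal_ne_top]
  refine lintegral_mono_ae ?_
  filter_upwards [ae_restrict_mem measurableSet_Ioo] with x hx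
  rw [← ENNReal.ofReal_mul (Real.exp_nonneg _)]
  refine ENNReal.ofReal_le_ofReal ?_
  have hΓ : 0 < Real.Gamma m := Real.Gamma_pos_of_pos hm
  have hx0 : (0:ℝ) < x := hx.1
  have he : Real.exp (-(b * t)) ≤ Real.exp (-b * x) := by
    apply Real.exp_le_exp.mpr
    nlinarith [hx.2]
  have h2 : (0:ℝ) ≤ b ^ m * x ^ (m - 1) := by positivity
  rw [_root_.gammaPDF, if_pos hx0.le]
  calc Real.exp (-(b * t)) * (b ^ m / Real.Gamma m * x ^ (m - 1))
      = b ^ m * x ^ (m - 1) * Real.exp (-(b * t)) / Real.Gamma m := by ring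
    _ ≤ b ^ m * x ^ (m - 1) * Real.exp (-b * x) / Real.Gamma m := by gcongr

end Bounds


/-- the first branch of Corollaries 5 and 7 of the paper: if `V` is
`Gamma(m, m/Ω)`-distributed and `W` is an independent nonnegative random variable with
`E[(1+W)^m] < ∞`, then for every `c > 0`,
`lim_{η→∞} η^m·Pr[ηV < c(1+W)] = (1/Γ(m+1))·(mc/Ω)^m·E[(1+W)^m]`. -/
theorem iot_diversity_first_branch
    {Ω : Type*} [MeasurableSpace Ω] (P : Measure Ω) [IsProbabilityMeasure P]
    (m Ωd : ℝ) (hm : 0 < m) (hΩd : 0 < Ωd)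
    (V W : Ω → ℝ) (hmV : Measurable V) (hmW : Measurable W)
    (hWnn : ∀ᵐ ω ∂P, 0 ≤ W ω)
    (hdV : HasDensity P V (gammaPDF m (m / Ωd)))
    (hindep : IndepFun V W P)
    (hInt : Integrable (fun ω => (1 + W ω) ^ m) P) :
    ∀ c : ℝ, 0 < c →
      Tendsto (fun η : ℝ => η ^ m * (P {ω | η * V ω < c * (1 + W ω)}).toReal)
        atTop (nhds ((1 / Real.Gamma (m + 1)) * (m * c / Ωd) ^ m *
          ∫ ω, (1 + W ω) ^ m ∂P)) := by
  intro c hc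
  have hb : 0 < m / Ωd := div_pos hm hΩd
  set b : ℝ := m / Ωd with hb_def
  have hΓ1 : 0 < Real.Gamma (m + 1) := Real.Gamma_pos_of_pos (by linarith)
  set μV : Measure ℝ := Measure.map V P with hμV
  set μW : Measure ℝ := Measure.map W P with hμW
  have hPV : IsProbabilityMeasure μV := Measure.isProbabilityMeasure_map hmV.aemeasurable
  have hPW : IsProbabilityMeasure μW := Measure.isProbabilityMeasure_map hmW.aemeasurable
  have hprod : Measure.map (fun ω => (V ω, W ω)) P = μV.prod μW :=
    (indepFun_iff_map_prod_eq_prod_map_map hmV.aemeasurable hmW.aemeasurable).mp hindep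
  set G : ℝ → ENNReal := fun t => μV (Set.Iio t) with hG
  have hGmono : Monotone G := fun s t hst => measure_mono (Set.Iio_subset_Iio hst)
  have hGmeas : Measurable G := hGmono.measurable
  have hGle : ∀ t, G t ≤ 1 := fun t => prob_le_one
  have hGeq : ∀ t : ℝ, G t = ∫⁻ x in Set.Iio t, ENNReal.ofReal (_root_.gammaPDF m b x) := by
    intro t
    have hdV' : Measure.map V P = volume.withDensity (fun x => ENNReal.ofReal (_root_.gammaPDF m b x)) := hdV
    rw [hG]
    simp only [hμV, hdV', withDensity_apply _ measurableSet_Iio]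
  -- key identity
  have hstep : ∀ η : ℝ, 0 < η →
      (P {ω | η * V ω < c * (1 + W ω)}).toReal =
        ∫ ω, (G (c * (1 + W ω) / η)).toReal ∂P := by
    intro η hη
    have hset : MeasurableSet {p : ℝ × ℝ | η * p.1 < c * (1 + p.2)} :=
      measurableSet_lt (by fun_prop) (by fun_prop)
    have h1 : P {ω | η * V ω < c * (1 + W ω)} =
        (μV.prod μW) {p : ℝ × ℝ | η * p.1 < c * (1 + p.2)} := by
      rw [← hprod, Measure.map_apply (hmV.prodMk hmW) hset]
      rfl
    have hslice : ∀ w : ℝ,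
        ((fun v => (v, w)) ⁻¹' {p : ℝ × ℝ | η * p.1 < c * (1 + p.2)}) =
          Set.Iio (c * (1 + w) / η) := by
      intro w
      ext v
      simp only [Set.mem_preimage, Set.mem_setOf_eq, Set.mem_Iio, lt_div_iff₀ hη, mul_comm]
    have hmeas2 : Measurable fun w : ℝ => G (c * (1 + w) / η) :=
      hGmeas.comp (by fun_prop)
    rw [h1, Measure.prod_apply_symm hset]
    simp_rw [hslice]
    rw [← integral_toReal hmeas2.aemeasurable
      (ae_of_all _ (fun w => lt_of_le_of_lt (hGle _) ENNReal.one_lt_top))]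
    rw [hμW, integral_map hmW.aemeasurable
      (hmeas2.ennreal_toReal.aestronglyMeasurable)]
  -- algebra helper
  have hkey : ∀ s η : ℝ, 0 ≤ s → 0 < η → η ^ m * ((b * (s / η)) ^ m) = (b * s) ^ m := by
    intro s η hs hη
    rw [show b * (s / η) = (b * s) / η by ring,
      Real.div_rpow (by positivity) hη.le, mul_comm,
      div_mul_cancel₀ _ (Real.rpow_pos_of_pos hη m).ne']
  -- DCT
  have hDCT : Tendsto (fun η : ℝ => ∫ ω, η ^ m * (G (c * (1 + W ω) / η)).toReal ∂P)
      atTop (nhds (∫ ω, (b * c) ^ m / Real.Gamma (m + 1) * (1 + W ω) ^ m ∂P)) := by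
    apply tendsto_integral_filter_of_dominated_convergence
      (bound := fun ω => (b * c) ^ m / Real.Gamma (m + 1) * (1 + W ω) ^ m)
    · filter_upwards with η
      exact (((hGmeas.comp (by fun_prop)).ennreal_toReal).const_mul _).aestronglyMeasurable
    · filter_upwards [eventually_gt_atTop 0] with η hη
      filter_upwards [hWnn] with ω hω
      have h1 : (0:ℝ) < 1 + W ω := by linarith
      have ht : 0 < c * (1 + W ω) / η := by positivity
      have hub := G_upper hm hb ht
      rw [← hGeq] at hub
      have htr : (G (c * (1 + W ω) / η)).toReal ≤
          (b * (c * (1 + W ω) / η)) ^ m / Real.Gamma (m + 1) :=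
        ENNReal.toReal_le_of_le_ofReal (by positivity) hub
      have hnn : 0 ≤ η ^ m * (G (c * (1 + W ω) / η)).toReal := by positivity
      rw [Real.norm_of_nonneg hnn]
      calc η ^ m * (G (c * (1 + W ω) / η)).toReal
          ≤ η ^ m * ((b * (c * (1 + W ω) / η)) ^ m / Real.Gamma (m + 1)) := by
            have := Real.rpow_pos_of_pos hη m
            gcongr
        _ = η ^ m * ((b * (c * (1 + W ω) / η)) ^ m) / Real.Gamma (m + 1) := by ring
        _ = (b * (c * (1 + W ω))) ^ m / Real.Gamma (m + 1) := by
            rw [hkey _ _ (by positivity) hη]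
        _ = (b * c) ^ m / Real.Gamma (m + 1) * (1 + W ω) ^ m := by
            rw [show b * (c * (1 + W ω)) = (b * c) * (1 + W ω) by ring,
              Real.mul_rpow (by positivity) h1.le]
            ring
    · exact (hInt.const_mul _)
    · filter_upwards [hWnn] with ω hω
      have h1 : (0:ℝ) < 1 + W ω := by linarith
      set s : ℝ := c * (1 + W ω) with hs_def
      have hs : 0 < s := by positivity
      have hKeq : (b * s) ^ m / Real.Gamma (m + 1) =
          (b * c) ^ m / Real.Gamma (m + 1) * (1 + W ω) ^ m := by
        rw [show b * s = (b * c) * (1 + W ω) by rw [hs_def]; ring,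
          Real.mul_rpow (by positivity) h1.le]
        ring
      rw [← hKeq]
      apply tendsto_of_tendsto_of_tendsto_of_le_of_le'
        (g := fun η : ℝ => Real.exp (-(b * s) / η) * ((b * s) ^ m / Real.Gamma (m + 1)))
        (h := fun _ : ℝ => (b * s) ^ m / Real.Gamma (m + 1))
      · have hx : Tendsto (fun η : ℝ => -(b * s) / η) atTop (nhds 0) :=
          tendsto_const_nhds.div_atTop tendsto_id
        have := (Real.continuous_exp.tendsto 0).comp hx
        rw [Real.exp_zero] at this
        simpa using this.mul_const ((b * s) ^ m / Real.Gamma (m + 1))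
      · exact tendsto_const_nhds
      · filter_upwards [eventually_gt_atTop 0] with η hη
        have ht : 0 < s / η := by positivity
        have hlb := G_lower hm hb (t := s / η) ht
        rw [← hGeq] at hlb
        have htr : Real.exp (-(b * (s / η))) * ((b * (s / η)) ^ m / Real.Gamma (m + 1)) ≤
            (G (s / η)).toReal := by
          have hfin : G (s / η) ≠ ⊤ := (lt_of_le_of_lt (hGle _) ENNReal.one_lt_top).ne
          have := ENNReal.toReal_mono hfin hlb
          rwa [ENNReal.toReal_ofReal (by positivity)] at this
        calc Real.exp (-(b * s) / η) * ((b * s) ^ m / Real.Gamma (m + 1))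
            = Real.exp (-(b * (s / η))) *
              (η ^ m * ((b * (s / η)) ^ m) / Real.Gamma (m + 1)) := by
              rw [hkey _ _ hs.le hη]
              ring_nf
          _ = η ^ m * (Real.exp (-(b * (s / η))) *
              ((b * (s / η)) ^ m / Real.Gamma (m + 1))) := by ring
          _ ≤ η ^ m * (G (s / η)).toReal := by
              have := Real.rpow_pos_of_pos hη m
              gcongr
      · filter_upwards [eventually_gt_atTop 0] with η hη
        have ht : 0 < s / η := by positivity
        have hub := G_upper hm hb (t := s / η) ht
        rw [← hGeq] at hub
        have htr : (G (s / η)).toReal ≤ (b * (s / η)) ^ m / Real.Gamma (m + 1) :=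
          ENNReal.toReal_le_of_le_ofReal (by positivity) hub
        calc η ^ m * (G (s / η)).toReal
            ≤ η ^ m * ((b * (s / η)) ^ m / Real.Gamma (m + 1)) := by
              have := Real.rpow_pos_of_pos hη m
              gcongr
          _ = η ^ m * ((b * (s / η)) ^ m) / Real.Gamma (m + 1) := by ring
          _ = (b * s) ^ m / Real.Gamma (m + 1) := by rw [hkey _ _ hs.le hη]
  -- conclude
  have hfinal : ∫ ω, (b * c) ^ m / Real.Gamma (m + 1) * (1 + W ω) ^ m ∂P =
      1 / Real.Gamma (m + 1) * (m * c / Ωd) ^ m * ∫ ω, (1 + W ω) ^ m ∂P := by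
    rw [integral_const_mul]
    congr 1
    rw [show b * c = m * c / Ωd by rw [hb_def]; ring]
    ring
  rw [← hfinal]
  apply Tendsto.congr' _ hDCT
  filter_upwards [eventually_gt_atTop 0] with η hη
  rw [integral_const_mul, ← hstep η hη]

end
end
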